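/- arXiv:1309.0662 — 9 statements merged into one kernel-verified Lean document; each statement's English description precedes it below -/
import Mathlib

section
/- Let G be a group and suppose there exist normal subgroups H, K, L of G such that H ⊓ K = H ⊓ L = K ⊓ L = ⊥ (the trivial subgroup) and H ⊔ K = H ⊔ L = K ⊔ L = ⊤ (the whole group), where ⊓ and ⊔ are taken in the lattice of subgroups of G. Then G is commutative. -/
/-!
Disjoint normal subgroups commute elementwise, so each of `H`, `K`, `L` centralizes the join
of the other two, which is `⊤`. Hence `H` and `K` are central, and so is `H ⊔ K = ⊤`.
-/

namespace Subgroup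

variable {G : Type*} [Group G]

theorem le_centralizer_of_normal_of_disjoint {N M : Subgroup G} [N.Normal] [M.Normal]
    (h : Disjoint N M) : M ≤ centralizer N :=
  fun y hy ↦ mem_centralizer_iff.mpr fun x hx ↦
    commute_of_normal_of_disjoint N M ‹_› ‹_› h x y hx hy

theorem le_center_of_sup_eq_top_of_le_centralizer {N M M' : Subgroup G}
    (hM : M ≤ centralizer N) (hM' : M' ≤ centralizer N) (hsup : M ⊔ M' = ⊤) :
    N ≤ center G :=
  centralizer_eq_top_iff_subset.mp <| top_le_iff.mp <| hsup ▸ sup_le hM hM'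

theorem le_center_of_disjoint_of_sup_eq_top {N M M' : Subgroup G}
    [N.Normal] [M.Normal] [M'.Normal] (hM : Disjoint N M) (hM' : Disjoint N M')
    (hsup : M ⊔ M' = ⊤) : N ≤ center G :=
  le_center_of_sup_eq_top_of_le_centralizer (le_centralizer_of_normal_of_disjoint hM)
    (le_centralizer_of_normal_of_disjoint hM') hsup

end Subgroup

/-- If the lattice of normal subgroups of a group `G` contains a copy of `M₃` as a
`(0,1)`-sublattice (witnessed by normal subgroups `H, K, L` with pairwise meets `⊥` and
pairwise joins `⊤`), then `G` is commutative. -/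
theorem comm_of_M3_in_normal_subgroup_lattice {G : Type*} [Group G]
    (H K L : Subgroup G) [H.Normal] [K.Normal] [L.Normal]
    (hHK : H ⊓ K = ⊥) (hHL : H ⊓ L = ⊥) (hKL : K ⊓ L = ⊥)
    (hHK' : H ⊔ K = ⊤) (hHL' : H ⊔ L = ⊤) (hKL' : K ⊔ L = ⊤) :
    ∀ a b : G, a * b = b * a := by
  have hH : H ≤ Subgroup.center G := Subgroup.le_center_of_disjoint_of_sup_eq_top
    (disjoint_iff.mpr hHK) (disjoint_iff.mpr hHL) hKL'
  have hK : K ≤ Subgroup.center G := Subgroup.le_center_of_disjoint_of_sup_eq_top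
    (disjoint_iff.mpr (inf_comm H K ▸ hHK)) (disjoint_iff.mpr hKL) hHL'
  have hcenter : Subgroup.center G = ⊤ := top_le_iff.mp (hHK' ▸ sup_le hH hK)
  intro a b
  exact Subgroup.mem_center_iff.mp (hcenter ▸ Subgroup.mem_top b) a
end

section
/- A group G is commutative if and only if there exist normal subgroups H, K, L of the product group G × G such that H ⊓ K = H ⊓ L = K ⊓ L = ⊥ and H ⊔ K = H ⊔ L = K ⊔ L = ⊤ in the lattice of subgroups of G × G. -/
/-!
Normal subgroups with trivial intersection commute elementwise. So if `H, K, L` are normal and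
pairwise complementary, `L` centralizes `H ⊔ K = ⊤` and `H` centralizes `K ⊔ L = ⊤`; both lie in
the center, hence so does `H ⊔ L = ⊤`. Conversely, for commutative `G` every subgroup of `G × G` is
normal, and the two coordinate axes together with the diagonal are pairwise complementary in any
group.
-/

namespace Subgroup

variable {M : Type*} [Group M]

theorem le_center_of_disjoint_of_sup_eq_top_s4 {A B C : Subgroup M} (hA : A.Normal) (hB : B.Normal)
    (hC : C.Normal) (hAC : Disjoint A C) (hBC : Disjoint B C) (hAB : A ⊔ B = ⊤) :
    C ≤ center M := by
  have hcent : A ⊔ B ≤ centralizer C :=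
    sup_le (fun a ha c hc ↦ (commute_of_normal_of_disjoint A C hA hC hAC a c ha hc).eq.symm)
      (fun b hb c hc ↦ (commute_of_normal_of_disjoint B C hB hC hBC b c hb hc).eq.symm)
  rw [hAB, top_le_iff, centralizer_eq_top_iff_subset] at hcent
  exact hcent

theorem isMulCommutative_of_isCompl_normal {H K L : Subgroup M} (hH : H.Normal) (hK : K.Normal)
    (hL : L.Normal) (hHK : IsCompl H K) (hHL : IsCompl H L) (hKL : IsCompl K L) :
    IsMulCommutative M := by
  have hLc := le_center_of_disjoint_of_sup_eq_top_s4 hH hK hL hHL.disjoint hKL.disjoint hHK.sup_eq_top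
  have hHc := le_center_of_disjoint_of_sup_eq_top_s4 hK hL hH hHK.disjoint.symm hHL.disjoint.symm
    hKL.sup_eq_top
  rw [← center_eq_top_iff, eq_top_iff, ← hHL.sup_eq_top]
  exact sup_le hHc hLc

theorem codisjoint_of_forall_exists_mul {A B : Subgroup M}
    (h : ∀ x, ∃ a ∈ A, ∃ b ∈ B, a * b = x) : Codisjoint A B :=
  codisjoint_iff.mpr <| eq_top_iff.mpr fun x _ ↦ by
    obtain ⟨a, ha, b, hb, rfl⟩ := h x
    exact mul_mem (mem_sup_left ha) (mem_sup_right hb)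

variable (M)

def diagonal : Subgroup (M × M) := MonoidHom.eqLocus (MonoidHom.fst M M) (MonoidHom.snd M M)

variable {M}

theorem mem_diagonal {p : M × M} : p ∈ diagonal M ↔ p.1 = p.2 := Iff.rfl

theorem isCompl_bot_prod_top_top_prod_bot :
    IsCompl ((⊥ : Subgroup M).prod (⊤ : Subgroup M)) ((⊤ : Subgroup M).prod ⊥) := by
  refine ⟨disjoint_def.mpr fun {p} hp hp' ↦ ?_, codisjoint_of_forall_exists_mul fun p ↦ ?_⟩
  · simp_all [mem_prod, Prod.ext_iff]
  · exact ⟨(1, p.2), by simp [mem_prod], (p.1, 1), by simp [mem_prod], by simp⟩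

theorem isCompl_bot_prod_top_diagonal : IsCompl ((⊥ : Subgroup M).prod ⊤) (diagonal M) := by
  refine ⟨disjoint_def.mpr fun {p} hp hp' ↦ ?_, codisjoint_of_forall_exists_mul fun p ↦ ?_⟩
  · simp_all [mem_prod, mem_diagonal, Prod.ext_iff]
  · exact ⟨(1, p.2 * p.1⁻¹), by simp [mem_prod], (p.1, p.1), rfl, by simp⟩

theorem isCompl_top_prod_bot_diagonal : IsCompl ((⊤ : Subgroup M).prod ⊥) (diagonal M) := by
  refine ⟨disjoint_def.mpr fun {p} hp hp' ↦ ?_, codisjoint_of_forall_exists_mul fun p ↦ ?_⟩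
  · simp_all [mem_prod, mem_diagonal, Prod.ext_iff]
  · exact ⟨(p.1 * p.2⁻¹, 1), by simp [mem_prod], (p.2, p.2), rfl, by simp⟩

end Subgroup

open Subgroup in
/-- A group `G` is commutative iff there are normal subgroups `H, K, L` of `G × G`
forming a copy of `M₃` (with `0` and `1`) in the lattice of subgroups of `G × G`:
pairwise meets are `⊥` and pairwise joins are `⊤`. -/
theorem comm_iff_M3_in_normal_subgroup_lattice_of_square {G : Type*} [Group G] :
    (∀ a b : G, a * b = b * a) ↔
      ∃ H K L : Subgroup (G × G), H.Normal ∧ K.Normal ∧ L.Normal ∧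
        H ⊓ K = ⊥ ∧ H ⊓ L = ⊥ ∧ K ⊓ L = ⊥ ∧
        H ⊔ K = ⊤ ∧ H ⊔ L = ⊤ ∧ K ⊔ L = ⊤ := by
  constructor
  · intro hcomm
    have : IsMulCommutative G := ⟨⟨hcomm⟩⟩
    have hHK := isCompl_bot_prod_top_top_prod_bot (M := G)
    have hHL := isCompl_bot_prod_top_diagonal (M := G)
    have hKL := isCompl_top_prod_bot_diagonal (M := G)
    exact ⟨_, _, diagonal G, inferInstance, inferInstance, inferInstance, hHK.inf_eq_bot,
      hHL.inf_eq_bot, hKL.inf_eq_bot, hHK.sup_eq_top, hHL.sup_eq_top, hKL.sup_eq_top⟩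
  · rintro ⟨H, K, L, hH, hK, hL, hHK, hHL, hKL, hHK', hHL', hKL'⟩ a b
    have := isMulCommutative_of_isCompl_normal hH hK hL (.of_eq hHK hHK') (.of_eq hHL hHL')
      (.of_eq hKL hKL')
    exact congrArg Prod.fst (mul_comm' (a, (1 : G)) (b, 1))
end

section
/- Let R be a non-unital ring and suppose there exist two-sided ideals I, J, K of R such that I ⊓ J = I ⊓ K = J ⊓ K = ⊥ and I ⊔ J = I ⊔ K = J ⊔ K = ⊤ in the lattice of two-sided ideals of R. Then R is a zeroring (i.e. r * s = 0 for all r, s ∈ R). -/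
/-!
Products `a * b` with `a ∈ A`, `b ∈ B` lie in `A ⊓ B`. Hence an ideal meeting two comaximal
ideals trivially annihilates `R` from the left: split the right factor along the two ideals.
In `M₃` both `J` and `K` are such ideals, and `J ⊔ K = ⊤`.
-/

namespace TwoSidedIdeal

variable {R : Type*} [NonUnitalRing R]

lemma exists_add_eq_of_sup_eq_top {I J : TwoSidedIdeal R} (h : I ⊔ J = ⊤) (x : R) :
    ∃ y ∈ I, ∃ z ∈ J, y + z = x :=
  mem_sup.mp (h ▸ mem_top R)

lemma mul_eq_zero_of_inf_eq_bot {A B : TwoSidedIdeal R} (h : A ⊓ B = ⊥) {a b : R}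
    (ha : a ∈ A) (hb : b ∈ B) : a * b = 0 := by
  have hab : a * b ∈ A ⊓ B := (mem_inf R).mpr ⟨A.mul_mem_right _ _ ha, B.mul_mem_left _ _ hb⟩
  rwa [h, mem_bot] at hab

lemma mul_eq_zero_of_inf_eq_bot_of_sup_eq_top {A I K : TwoSidedIdeal R}
    (hAI : A ⊓ I = ⊥) (hAK : A ⊓ K = ⊥) (hIK : I ⊔ K = ⊤) {a : R} (ha : a ∈ A) (b : R) :
    a * b = 0 := by
  obtain ⟨i, hi, k, hk, rfl⟩ := exists_add_eq_of_sup_eq_top hIK b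
  rw [mul_add, mul_eq_zero_of_inf_eq_bot hAI ha hi, mul_eq_zero_of_inf_eq_bot hAK ha hk,
    add_zero]

end TwoSidedIdeal

open TwoSidedIdeal in
/-- If the lattice of two-sided ideals of a non-unital ring `R` contains a copy of `M₃`
as a `(0,1)`-sublattice (witnessed by ideals `I, J, K` with pairwise meets `⊥` and
pairwise joins `⊤`), then `R` is a zeroring: `r * s = 0` for all `r, s ∈ R`. -/
theorem zeroring_of_M3_in_ideal_lattice {R : Type*} [NonUnitalRing R]
    (I J K : TwoSidedIdeal R)
    (hIJ : I ⊓ J = ⊥) (hIK : I ⊓ K = ⊥) (hJK : J ⊓ K = ⊥)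
    (hIJ' : I ⊔ J = ⊤) (hIK' : I ⊔ K = ⊤) (hJK' : J ⊔ K = ⊤) :
    ∀ r s : R, r * s = 0 := by
  intro r s
  obtain ⟨j, hj, k, hk, rfl⟩ := exists_add_eq_of_sup_eq_top hJK' r
  have hjs : j * s = 0 :=
    mul_eq_zero_of_inf_eq_bot_of_sup_eq_top (inf_comm I J ▸ hIJ) hJK hIK' hj s
  have hks : k * s = 0 :=
    mul_eq_zero_of_inf_eq_bot_of_sup_eq_top (inf_comm I K ▸ hIK) (inf_comm J K ▸ hJK) hIJ' hk s
  rw [add_mul, hjs, hks, add_zero]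
end

section
/- A non-unital ring R is a zeroring (i.e. r * s = 0 for all r, s ∈ R) if and only if there exist two-sided ideals I, J, K of the product ring R × R such that I ⊓ J = I ⊓ K = J ⊓ K = ⊥ and I ⊔ J = I ⊔ K = J ⊔ K = ⊤ in the lattice of two-sided ideals of R × R. -/
/-! A product of an element of `I` with one of `J` lies in `I ⊓ J`, so it vanishes when
`I ⊓ J = ⊥`. An element of `I` multiplies every `y ∈ J ⊔ K = ⊤`
to zero, and likewise an element of `J` every `y ∈ I ⊔ K`; since `I ⊔ J = ⊤`, all products vanish.
Conversely, under zero multiplication the two-sided ideals are exactly the additive subgroups, and the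
two axes and the diagonal of `R × R` are pairwise complementary subgroups. -/

namespace AddSubgroup

open AddMonoidHom

variable {G H : Type*} [AddCommGroup G] [AddCommGroup H]

lemma isCompl_ker_snd_ker_fst : IsCompl (snd G H).ker (fst G H).ker := by
  refine ⟨disjoint_def.2 fun h1 h2 ↦ ?_, codisjoint_iff.2 <| (eq_top_iff' _).2 fun p ↦
    mem_sup.2 ⟨(p.1, 0), ?_, (0, p.2), ?_, ?_⟩⟩ <;> simp_all [Prod.ext_iff, mem_prod]

lemma isCompl_ker_snd_ker_sub : IsCompl (snd G G).ker (fst G G - snd G G).ker := by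
  refine ⟨disjoint_def.2 fun h1 h2 ↦ ?_, codisjoint_iff.2 <| (eq_top_iff' _).2 fun p ↦
    mem_sup.2 ⟨(p.1 - p.2, 0), ?_, (p.2, p.2), ?_, ?_⟩⟩ <;> simp_all [Prod.ext_iff, mem_prod]

lemma isCompl_ker_fst_ker_sub : IsCompl (fst G G).ker (fst G G - snd G G).ker := by
  refine ⟨disjoint_def.2 fun h1 h2 ↦ ?_, codisjoint_iff.2 <| (eq_top_iff' _).2 fun p ↦
    mem_sup.2 ⟨(0, p.2 - p.1), ?_, (p.1, p.1), ?_, ?_⟩⟩ <;> simp_all [Prod.ext_iff, mem_prod]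

end AddSubgroup

namespace TwoSidedIdeal

variable {S : Type*} [NonUnitalNonAssocRing S]

lemma mul_eq_zero_of_disjoint {I J : TwoSidedIdeal S} (h : Disjoint I J) {x y : S}
    (hx : x ∈ I) (hy : y ∈ J) : x * y = 0 :=
  (mem_bot S).1 <| h.le_bot <| (mem_inf _).2 ⟨I.mul_mem_right x y hx, J.mul_mem_left x y hy⟩

lemma mul_eq_zero_of_disjoint_of_codisjoint {I J K : TwoSidedIdeal S} (hIJ : Disjoint I J)
    (hIK : Disjoint I K) (hJK : Codisjoint J K) {x : S} (hx : x ∈ I) (y : S) : x * y = 0 := by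
  obtain ⟨j, hj, k, hk, rfl⟩ := mem_sup.1 (hJK.eq_top ▸ mem_top _ : y ∈ J ⊔ K)
  rw [mul_add, mul_eq_zero_of_disjoint hIJ hx hj, mul_eq_zero_of_disjoint hIK hx hk, add_zero]

lemma mul_eq_zero_of_pairwise_isCompl {I J K : TwoSidedIdeal S} (hIJ : IsCompl I J)
    (hIK : IsCompl I K) (hJK : IsCompl J K) (x y : S) : x * y = 0 := by
  obtain ⟨i, hi, j, hj, rfl⟩ := mem_sup.1 (hIJ.sup_eq_top ▸ mem_top _ : x ∈ I ⊔ J)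
  rw [add_mul,
    mul_eq_zero_of_disjoint_of_codisjoint hIJ.disjoint hIK.disjoint hJK.codisjoint hi,
    mul_eq_zero_of_disjoint_of_codisjoint hIJ.disjoint.symm hJK.disjoint hIK.codisjoint hj,
    add_zero]

def orderIsoAddSubgroupOfMulEqZero (h : ∀ x y : S, x * y = 0) :
    AddSubgroup S ≃o TwoSidedIdeal S where
  toFun H := mk' H H.zero_mem H.add_mem H.neg_mem (fun _ ↦ h _ _ ▸ H.zero_mem)
    (fun _ ↦ h _ _ ▸ H.zero_mem)
  invFun I := .ofClass I
  left_inv H := by ext; exact mem_mk' ..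
  right_inv I := by ext; simp
  map_rel_iff' := by simp [SetLike.le_def]

open AddMonoidHom AddSubgroup in
lemma exists_pairwise_isCompl_of_mul_eq_zero {R : Type*} [NonUnitalNonAssocRing R]
    (h : ∀ r s : R, r * s = 0) :
    ∃ I J K : TwoSidedIdeal (R × R), IsCompl I J ∧ IsCompl I K ∧ IsCompl J K := by
  let e := orderIsoAddSubgroupOfMulEqZero fun x y : R × R ↦ Prod.ext (h _ _) (h _ _)
  exact ⟨e (snd R R).ker, e (fst R R).ker, e (fst R R - snd R R).ker,
    e.isCompl isCompl_ker_snd_ker_fst, e.isCompl isCompl_ker_snd_ker_sub,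
    e.isCompl isCompl_ker_fst_ker_sub⟩

end TwoSidedIdeal

/-- A non-unital ring `R` is a zeroring (`r * s = 0` for all `r, s`) iff there exist
two-sided ideals `I, J, K` of the product ring `R × R` forming a copy of `M₃` (with `0`
and `1`) in the lattice of two-sided ideals of `R × R`: pairwise meets are `⊥` and
pairwise joins are `⊤`. -/
theorem zeroring_iff_M3_in_ideal_lattice_of_square {R : Type*} [NonUnitalRing R] :
    (∀ r s : R, r * s = 0) ↔
      ∃ I J K : TwoSidedIdeal (R × R),
        I ⊓ J = ⊥ ∧ I ⊓ K = ⊥ ∧ J ⊓ K = ⊥ ∧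
        I ⊔ J = ⊤ ∧ I ⊔ K = ⊤ ∧ J ⊔ K = ⊤ := by
  constructor
  · intro h
    obtain ⟨I, J, K, hIJ, hIK, hJK⟩ := TwoSidedIdeal.exists_pairwise_isCompl_of_mul_eq_zero h
    exact ⟨I, J, K, hIJ.inf_eq_bot, hIK.inf_eq_bot, hJK.inf_eq_bot,
      hIJ.sup_eq_top, hIK.sup_eq_top, hJK.sup_eq_top⟩
  · rintro ⟨I, J, K, hIJ, hIK, hJK, sIJ, sIK, sJK⟩ r s
    have hrs := TwoSidedIdeal.mul_eq_zero_of_pairwise_isCompl (.of_eq hIJ sIJ) (.of_eq hIK sIK)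
      (.of_eq hJK sJK) (r, 0) (s, 0)
    exact congrArg Prod.fst hrs
end

section
/- A non-unital ring R is a zeroring (i.e. r * s = 0 for all r, s ∈ R) if and only if every non-unital subring of the product ring R × R is a two-sided ideal of R × R, i.e. every additively and multiplicatively closed additive subgroup S of R × R satisfies x * s ∈ S and s * x ∈ S for all x ∈ R × R and s ∈ S. -/
/-! If all products vanish, every product in `R × R` is `0`, which lies in every subring. Conversely,
the diagonal `{(a, a)}` is a subring of `R × R`; if it absorbs `(r, 0)` from the left, then
`(r, 0) * (s, s) = (r * s, 0)` lies on the diagonal, so `r * s = 0`. -/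

theorem Prod.mul_eq_zero_of_forall_mul_eq_zero {R S : Type*} [MulZeroClass R] [MulZeroClass S]
    (hR : ∀ r r' : R, r * r' = 0) (hS : ∀ s s' : S, s * s' = 0) (p q : R × S) : p * q = 0 :=
  Prod.ext (hR _ _) (hS _ _)

theorem mul_eq_zero_of_forall_mul_mem_eqLocus_fst_snd {R : Type*} [NonUnitalNonAssocRing R]
    (h : ∀ x : R × R, ∀ d ∈ (NonUnitalRingHom.fst R R).eqLocus (NonUnitalRingHom.snd R R),
      x * d ∈ (NonUnitalRingHom.fst R R).eqLocus (NonUnitalRingHom.snd R R))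
    (r s : R) : r * s = 0 := by
  have hdiag : r * s = 0 * s := h (r, 0) (s, s) rfl
  rwa [zero_mul] at hdiag

/-- A non-unital ring `R` is a zeroring (`r * s = 0` for all `r, s`) iff every non-unital
subring `S` of the product ring `R × R` is a two-sided ideal of `R × R`, i.e.
`x * s ∈ S` and `s * x ∈ S` for all `x ∈ R × R` and `s ∈ S`. -/
theorem zeroring_iff_all_subrings_of_square_are_ideals {R : Type*} [NonUnitalRing R] :
    (∀ r s : R, r * s = 0) ↔
      ∀ S : NonUnitalSubring (R × R), ∀ x : R × R, ∀ s ∈ S, x * s ∈ S ∧ s * x ∈ S := by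
  constructor
  · intro h S x s _
    have hprod := Prod.mul_eq_zero_of_forall_mul_eq_zero h h
    rw [hprod x s, hprod s x]
    exact ⟨S.zero_mem, S.zero_mem⟩
  · intro h
    exact mul_eq_zero_of_forall_mul_mem_eqLocus_fst_snd fun x d hd => (h _ x d hd).1
end

section
/- Let θ, φ, ψ be equivalence relations on a set A such that θ ∘ φ = φ ∘ θ (θ and φ permute) and θ ≤ ψ. Then (θ ⊔ φ) ⊓ ψ = θ ⊔ (φ ⊓ ψ) in the lattice of equivalence relations on A. -/
/-!
When `φ ∘ θ ⊆ θ ∘ φ`, the composite `θ ∘ φ` is already an equivalence relation, hence equals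
`θ ⊔ φ`. So if `a (θ ⊔ φ) b` and `a ψ b`, there is `c` with `a θ c` and `c φ b`; as `θ ≤ ψ`
also `c ψ b`, whence `a θ c (φ ⊓ ψ) b`. The reverse inequality holds in every lattice.
-/

namespace Setoid

variable {α : Type*} {θ φ ψ : Setoid α}

def compOfComm (θ φ : Setoid α)
    (h : ∀ a b : α, (∃ c, φ a c ∧ θ c b) → ∃ c, θ a c ∧ φ c b) : Setoid α where
  r a b := ∃ c, θ a c ∧ φ c b
  iseqv :=
    { refl := fun a => ⟨a, θ.refl a, φ.refl a⟩
      symm := fun ⟨c, hac, hcb⟩ => h _ _ ⟨c, φ.symm hcb, θ.symm hac⟩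
      trans := fun ⟨c, hac, hcb⟩ ⟨d, hbd, hde⟩ =>
        let ⟨d', hcd', hd'd⟩ := h c d ⟨_, hcb, hbd⟩
        ⟨d', θ.trans hac hcd', φ.trans hd'd hde⟩ }

theorem sup_eq_compOfComm (h : ∀ a b : α, (∃ c, φ a c ∧ θ c b) → ∃ c, θ a c ∧ φ c b) :
    θ ⊔ φ = compOfComm θ φ h := by
  refine le_antisymm (sup_le (fun a b hab => ⟨b, hab, φ.refl b⟩)
    (fun a b hab => ⟨a, θ.refl a, hab⟩)) ?_
  rintro a b ⟨c, hac, hcb⟩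
  exact (θ ⊔ φ).trans (le_sup_left (b := φ) hac) (le_sup_right (a := θ) hcb)

theorem sup_inf_le_assoc_of_le_of_comm
    (h : ∀ a b : α, (∃ c, φ a c ∧ θ c b) → ∃ c, θ a c ∧ φ c b) (hle : θ ≤ ψ) :
    (θ ⊔ φ) ⊓ ψ ≤ θ ⊔ φ ⊓ ψ := by
  rw [sup_eq_compOfComm h]
  rintro a b ⟨⟨c, hac, hcb⟩, hab⟩
  have hcb' : ψ c b := ψ.trans (ψ.symm (hle hac)) hab
  exact (θ ⊔ φ ⊓ ψ).trans (le_sup_left (b := φ ⊓ ψ) hac)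
    (le_sup_right (a := θ) (show (φ ⊓ ψ) c b from ⟨hcb, hcb'⟩))

end Setoid

/-- If `θ` and `φ` are permuting equivalence relations on a set `A` and `θ ≤ ψ`, then
the modular law instance `(θ ⊔ φ) ⊓ ψ = θ ⊔ (φ ⊓ ψ)` holds in the lattice of
equivalence relations on `A`. -/
theorem permuting_implies_modular_instance {A : Type*} (θ φ ψ : Setoid A)
    (hperm : ∀ a b : A, (∃ c, θ a c ∧ φ c b) ↔ ∃ c, φ a c ∧ θ c b)
    (hle : θ ≤ ψ) :
    (θ ⊔ φ) ⊓ ψ = θ ⊔ (φ ⊓ ψ) :=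
  le_antisymm (Setoid.sup_inf_le_assoc_of_le_of_comm (fun a b => (hperm a b).mpr) hle)
    (le_inf (sup_le_sup_left inf_le_left θ) (sup_le hle inf_le_right))
end

section
/- Let A be a set, let p : A × A × A → A be a Mal'tsev operation (p(x,x,y) = y and p(x,y,y) = x for all x, y ∈ A), and let θ, φ be equivalence relations on A that are both compatible with p. Then θ ∘ φ = φ ∘ θ. -/
/-! Given `a θ c φ b`, the element `p a c b` witnesses `a φ (p a c b) θ b`:
applying `p` coordinatewise to `(a, c, b) θ (c, c, b)` gives `p a c b θ b`, and to
`(a, b, b) φ (a, c, b)` gives `a φ p a c b`. -/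

section

variable {A : Type*}

def IsCompatible (p : A → A → A → A) (r : A → A → Prop) : Prop :=
  ∀ x₁ y₁ x₂ y₂ x₃ y₃ : A, r x₁ y₁ → r x₂ y₂ → r x₃ y₃ → r (p x₁ x₂ x₃) (p y₁ y₂ y₃)

theorem IsCompatible.rel_maltsev_left {p : A → A → A → A} (hp : ∀ x y, p x x y = y)
    {θ : Setoid A} (hθ : IsCompatible p θ) {a b c : A} (hac : θ a c) : θ (p a c b) b := by
  simpa only [hp] using hθ a c c c b b hac (θ.refl c) (θ.refl b)

theorem IsCompatible.rel_maltsev_right {p : A → A → A → A} (hp : ∀ x y, p x y y = x)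
    {φ : Setoid A} (hφ : IsCompatible p φ) {a b c : A} (hcb : φ c b) : φ a (p a c b) := by
  simpa only [hp] using hφ a a b c b b (φ.refl a) (φ.symm hcb) (φ.refl b)

theorem IsCompatible.comp_le_comp_of_maltsev {p : A → A → A → A}
    (hp1 : ∀ x y, p x x y = y) (hp2 : ∀ x y, p x y y = x) {θ φ : Setoid A}
    (hθ : IsCompatible p θ) (hφ : IsCompatible p φ) {a b : A} :
    (∃ c, θ a c ∧ φ c b) → ∃ c, φ a c ∧ θ c b := by
  rintro ⟨c, hac, hcb⟩
  exact ⟨p a c b, hφ.rel_maltsev_right hp2 hcb, hθ.rel_maltsev_left hp1 hac⟩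

end

/-- If a set `A` carries a Mal'tsev operation `p` (so `p x x y = y` and `p x y y = x`)
and `θ, φ` are equivalence relations on `A` compatible with `p`, then `θ` and `φ`
permute: `θ ∘ φ = φ ∘ θ`. -/
theorem maltsev_implies_permuting {A : Type*} (p : A → A → A → A)
    (hp1 : ∀ x y : A, p x x y = y) (hp2 : ∀ x y : A, p x y y = x)
    (θ φ : Setoid A)
    (hθ : ∀ x₁ y₁ x₂ y₂ x₃ y₃ : A,
      θ x₁ y₁ → θ x₂ y₂ → θ x₃ y₃ → θ (p x₁ x₂ x₃) (p y₁ y₂ y₃))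
    (hφ : ∀ x₁ y₁ x₂ y₂ x₃ y₃ : A,
      φ x₁ y₁ → φ x₂ y₂ → φ x₃ y₃ → φ (p x₁ x₂ x₃) (p y₁ y₂ y₃)) :
    ∀ a b : A, (∃ c, θ a c ∧ φ c b) ↔ ∃ c, φ a c ∧ θ c b := fun _ _ =>
  ⟨IsCompatible.comp_le_comp_of_maltsev hp1 hp2 hθ hφ,
    IsCompatible.comp_le_comp_of_maltsev hp1 hp2 hφ hθ⟩
end

section
/- Let A be a nonempty set and let t : A × A × A → A. Then the following are equivalent: (a) t is a Mal'tsev operation (t(x,x,y) = y and t(x,y,y) = x for all x, y ∈ A) and t commutes with itself; (b) there exists an abelian group structure (A, +, −, 0) on A such that t(x,y,z) = x − y + z for all x, y, z ∈ A. -/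
/-!
Fix a base point `e`. Put `x + y := t x e y`, `0 := e` and `-x := t e x e`. Every group law,
and the identity `t x y z = x - y + z`, is an instance of the medial law with all but two or
three of the nine entries equal to `e`, which the Mal'tsev identities then collapse.
-/

structure IsTernaryAbelianGroup {A : Type*} (t : A → A → A → A) : Prop where
  cancel_left : ∀ x y : A, t x x y = y
  cancel_right : ∀ x y : A, t x y y = x
  medial : ∀ x₁₁ x₁₂ x₁₃ x₂₁ x₂₂ x₂₃ x₃₁ x₃₂ x₃₃ : A,
    t (t x₁₁ x₁₂ x₁₃) (t x₂₁ x₂₂ x₂₃) (t x₃₁ x₃₂ x₃₃) =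
      t (t x₁₁ x₂₁ x₃₁) (t x₁₂ x₂₂ x₃₂) (t x₁₃ x₂₃ x₃₃)

theorem isTernaryAbelianGroup_sub_add (A : Type*) [AddCommGroup A] :
    IsTernaryAbelianGroup (fun x y z : A => x - y + z) where
  cancel_left _ _ := by abel
  cancel_right _ _ := by abel
  medial _ _ _ _ _ _ _ _ _ := by abel

namespace IsTernaryAbelianGroup

variable {A : Type*} {t : A → A → A → A}

theorem assoc (h : IsTernaryAbelianGroup t) (e a b c : A) :
    t (t a e b) e c = t a e (t b e c) := by
  simpa only [h.cancel_left, h.cancel_right] using h.medial a e b e e e e e c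

theorem comm (h : IsTernaryAbelianGroup t) (e a b : A) : t a e b = t b e a := by
  simpa only [h.cancel_left, h.cancel_right] using h.medial e e a e e e b e e

theorem neg_add_cancel (h : IsTernaryAbelianGroup t) (e a : A) : t (t e a e) e a = e := by
  simpa only [h.cancel_left, h.cancel_right] using h.medial e a e e e e e e a

theorem add_neg_eq (h : IsTernaryAbelianGroup t) (e x y : A) : t x e (t e y e) = t x y e := by
  simpa only [h.cancel_left, h.cancel_right] using h.medial x e e e e e e y e

theorem eq_add_base (h : IsTernaryAbelianGroup t) (e x y z : A) : t x y z = t (t x y e) e z := by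
  simpa only [h.cancel_left, h.cancel_right] using (h.medial x y e e e e e e z).symm

abbrev toAddCommGroup (h : IsTernaryAbelianGroup t) (e : A) : AddCommGroup A :=
  letI : Add A := ⟨fun a b => t a e b⟩
  letI : Zero A := ⟨e⟩
  letI : Neg A := ⟨fun a => t e a e⟩
  { AddGroup.ofLeftAxioms (h.assoc e) (h.cancel_left e) (h.neg_add_cancel e) with
    add_comm := h.comm e }

theorem eq_sub_add (h : IsTernaryAbelianGroup t) (e x y z : A) :
    letI := h.toAddCommGroup e
    t x y z = x - y + z := by
  show t x y z = t (t x e (t e y e)) e z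
  rw [h.add_neg_eq, ← h.eq_add_base]

end IsTernaryAbelianGroup

/-- A ternary operation `t` on a nonempty set `A` is a self-commuting Mal'tsev operation
(i.e. `(A, t)` is a ternary Abelian group) iff there is an abelian group structure on `A`
with `t x y z = x - y + z`. -/
theorem ternary_abelian_group_iff_affine {A : Type*} [Nonempty A] (t : A → A → A → A) :
    ((∀ x y : A, t x x y = y) ∧ (∀ x y : A, t x y y = x) ∧
      (∀ x₁₁ x₁₂ x₁₃ x₂₁ x₂₂ x₂₃ x₃₁ x₃₂ x₃₃ : A,
        t (t x₁₁ x₁₂ x₁₃) (t x₂₁ x₂₂ x₂₃) (t x₃₁ x₃₂ x₃₃) =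
          t (t x₁₁ x₂₁ x₃₁) (t x₁₂ x₂₂ x₃₂) (t x₁₃ x₂₃ x₃₃))) ↔
      ∃ _ : AddCommGroup A, ∀ x y z : A, t x y z = x - y + z := by
  constructor
  · rintro ⟨cancel_left, cancel_right, medial⟩
    have h : IsTernaryAbelianGroup t := ⟨cancel_left, cancel_right, medial⟩
    obtain ⟨e⟩ := ‹Nonempty A›
    exact ⟨h.toAddCommGroup e, h.eq_sub_add e⟩
  · rintro ⟨_, ht⟩
    obtain rfl : t = fun x y z => x - y + z := funext₃ ht
    have h := isTernaryAbelianGroup_sub_add A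
    exact ⟨h.cancel_left, h.cancel_right, h.medial⟩
end

section
/- Let A be a set, let n ∈ ℕ, and let m₀, …, mₙ : A⁴ → A be operations satisfying the Day identities on A: (D1) m₀(x,y,z,u) = x; (D2) mᵢ(x,y,y,x) = x for all 0 ≤ i ≤ n; (D3) mᵢ(x,x,z,z) = mᵢ₊₁(x,x,z,z) for all even i < n; (D4) mᵢ(x,y,y,u) = mᵢ₊₁(x,y,y,u) for all odd i < n; (D5) mₙ(x,y,z,u) = u, for all x, y, z, u ∈ A. Let γ be an equivalence relation on A compatible with each mᵢ, and let a, b, c, d ∈ A with b γ d. Then a γ c if and only if mᵢ(a,a,c,c) γ mᵢ(a,b,d,c) for all 0 ≤ i ≤ n. -/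
/-!
Both directions compare everything with `a`. If `a γ c`, then `(a, b, d, c)` and `(a, a, c, c)`
are both `γ`-related coordinatewise to `(a, b, b, a)`, which every `mᵢ` sends to `a` by (D2).
Conversely, the values `mᵢ(a, b, d, c)` form a `γ`-chain from `m₀(a, b, d, c) = a` to
`mₙ(a, b, d, c) = c`: at an even step (D3) links them through the related values at `(a, a, c, c)`,
and at an odd step (D4) through `mᵢ(a, b, b, c) = mᵢ₊₁(a, b, b, c)`, using `b γ d`.
-/

namespace Setoid

variable {A : Type*} (γ : Setoid A)

def Compatible₄ (f : A → A → A → A → A) : Prop :=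
  ∀ x₁ y₁ x₂ y₂ x₃ y₃ x₄ y₄ : A,
    γ x₁ y₁ → γ x₂ y₂ → γ x₃ y₃ → γ x₄ y₄ → γ (f x₁ x₂ x₃ x₄) (f y₁ y₂ y₃ y₄)

variable {γ}

theorem rel_zero_of_forall_lt_rel_succ {u : ℕ → A} {n : ℕ}
    (h : ∀ k < n, γ (u k) (u (k + 1))) : γ (u 0) (u n) := by
  induction n with
  | zero => exact γ.refl _
  | succ n ih =>
    exact γ.trans (ih fun k hk ↦ h k (Nat.lt_succ_of_lt hk)) (h n (Nat.lt_succ_self n))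

namespace Compatible₄

variable {f g : A → A → A → A → A} {a b c d : A}

theorem apply_rel_of_diag (hf : γ.Compatible₄ f) (hdiag : ∀ x y, f x y y x = x)
    (hac : γ a c) (hbd : γ b d) : γ (f a b d c) a := by
  simpa only [hdiag] using hf a a b b d b c a (γ.refl a) (γ.refl b) (γ.symm hbd) (γ.symm hac)

theorem apply_rel_apply_of_eq_on_middle (hf : γ.Compatible₄ f) (hg : γ.Compatible₄ g)
    (hfg : ∀ x y u, f x y y u = g x y y u) (hbd : γ b d) : γ (f a b d c) (g a b d c) :=
  calc γ (f a b d c) (f a b b c) :=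
        hf _ _ _ _ _ _ _ _ (γ.refl a) (γ.refl b) (γ.symm hbd) (γ.refl c)
    _ = g a b b c := hfg a b c
    γ _ (g a b d c) := hg _ _ _ _ _ _ _ _ (γ.refl a) (γ.refl b) hbd (γ.refl c)

end Compatible₄

end Setoid

open Setoid

/-- Let `m 0, …, m n : A⁴ → A` satisfy the Day identities (D1)–(D5) on a set `A`, let `γ`
be an equivalence relation on `A` compatible with each `m i` (`i ≤ n`), and let
`a, b, c, d ∈ A` with `b γ d`. Then `a γ c` iff `m i a a c c γ m i a b d c` for all
`i ≤ n`. -/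
theorem day_terms_commutator_criterion {A : Type*} (n : ℕ)
    (m : ℕ → A → A → A → A → A)
    (hD1 : ∀ x y z u : A, m 0 x y z u = x)
    (hD2 : ∀ i ≤ n, ∀ x y : A, m i x y y x = x)
    (hD3 : ∀ i < n, Even i → ∀ x z : A, m i x x z z = m (i + 1) x x z z)
    (hD4 : ∀ i < n, Odd i → ∀ x y u : A, m i x y y u = m (i + 1) x y y u)
    (hD5 : ∀ x y z u : A, m n x y z u = u)
    (γ : Setoid A)
    (hcompat : ∀ i ≤ n, ∀ x₁ y₁ x₂ y₂ x₃ y₃ x₄ y₄ : A,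
      γ x₁ y₁ → γ x₂ y₂ → γ x₃ y₃ → γ x₄ y₄ →
        γ (m i x₁ x₂ x₃ x₄) (m i y₁ y₂ y₃ y₄))
    (a b c d : A) (hbd : γ b d) :
    γ a c ↔ ∀ i ≤ n, γ (m i a a c c) (m i a b d c) := by
  have compat : ∀ i ≤ n, γ.Compatible₄ (m i) := hcompat
  constructor
  · intro hac i hi
    exact γ.trans ((compat i hi).apply_rel_of_diag (hD2 i hi) hac hac)
      (γ.symm ((compat i hi).apply_rel_of_diag (hD2 i hi) hac hbd))
  · intro h
    have step : ∀ k < n, γ (m k a b d c) (m (k + 1) a b d c) := by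
      intro k hk
      rcases Nat.even_or_odd k with heven | hodd
      · calc γ (m k a b d c) (m k a a c c) := γ.symm (h k hk.le)
          _ = m (k + 1) a a c c := hD3 k hk heven a c
          γ _ (m (k + 1) a b d c) := h (k + 1) hk
      · exact (compat k hk.le).apply_rel_apply_of_eq_on_middle (compat (k + 1) hk)
          (hD4 k hk hodd) hbd
    simpa only [hD1, hD5] using rel_zero_of_forall_lt_rel_succ step
end
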